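/- arXiv:1511.08962 — 6 statements merged into one kernel-verified Lean document; each statement's English description precedes it below -/
import Mathlib

section
/- If (s,p) ∈ 𝔾, i.e., s = z₁+z₂ and p = z₁z₂ with |z₁| < 1 and |z₂| < 1, then |φ(α,s,p)| < 1 for every α in the closed unit disk, where φ(α,s,p) = (2αp − s)/(2 − αs). -/
open Complex

/- For `(s, p) = (z₁ + z₂, z₁ z₂)` the defect `|2 - αs|² - |2αp - s|²` is a sum of squares weighted
by `1 - |z₁|²`, `1 - |z₂|²` and `1 - |α|²`, and the first summand is strictly positive on the
bidisk. -/

theorem normSq_sub_normSq_eq (α z₁ z₂ : ℂ) :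
    normSq (2 - α * (z₁ + z₂)) - normSq (2 * α * (z₁ * z₂) - (z₁ + z₂)) =
      2 * (1 - normSq z₁) * normSq (1 - α * z₂) + 2 * (1 - normSq z₂) * normSq (1 - α * z₁) +
        (1 - normSq α) * normSq (z₁ - z₂) := by
  simp only [normSq_apply, sub_re, sub_im, add_re, add_im, mul_re, mul_im, re_ofNat, im_ofNat,
    one_re, one_im]
  ring

theorem norm_two_mul_mul_sub_lt_norm {α z₁ z₂ : ℂ} (hα : ‖α‖ ≤ 1) (hz₁ : ‖z₁‖ < 1)
    (hz₂ : ‖z₂‖ < 1) : ‖2 * α * (z₁ * z₂) - (z₁ + z₂)‖ < ‖2 - α * (z₁ + z₂)‖ := by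
  have hα' : normSq α ≤ 1 := by
    rw [normSq_eq_norm_sq]; exact pow_le_one₀ (norm_nonneg _) hα
  have hz₁' : normSq z₁ < 1 := by
    rw [normSq_eq_norm_sq]; exact pow_lt_one₀ (norm_nonneg _) hz₁ two_ne_zero
  have hz₂' : normSq z₂ ≤ 1 := by
    rw [normSq_eq_norm_sq]; exact pow_le_one₀ (norm_nonneg _) hz₂.le
  have hαz₂ : 1 - α * z₂ ≠ 0 := by
    refine sub_ne_zero.2 fun h => ?_
    have : ‖α * z₂‖ < 1 := by
      rw [norm_mul]; exact mul_lt_one_of_nonneg_of_lt_one_right hα (norm_nonneg _) hz₂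
    simp [← h] at this
  have hpos : 0 < 2 * (1 - normSq z₁) * normSq (1 - α * z₂) :=
    mul_pos (by linarith) (normSq_pos.2 hαz₂)
  have hnonneg₂ : 0 ≤ 2 * (1 - normSq z₂) * normSq (1 - α * z₁) :=
    mul_nonneg (by linarith) (normSq_nonneg _)
  have hnonneg₃ : 0 ≤ (1 - normSq α) * normSq (z₁ - z₂) :=
    mul_nonneg (by linarith) (normSq_nonneg _)
  rw [← sq_lt_sq₀ (norm_nonneg _) (norm_nonneg _), ← normSq_eq_norm_sq, ← normSq_eq_norm_sq]
  linarith [normSq_sub_normSq_eq α z₁ z₂]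

theorem stmt2 (α s p z₁ z₂ : ℂ) (hα : ‖α‖ ≤ 1)
    (hz₁ : ‖z₁‖ < 1) (hz₂ : ‖z₂‖ < 1) (hs : s = z₁ + z₂) (hp : p = z₁ * z₂) :
    ‖(2 * α * p - s) / (2 - α * s)‖ < 1 := by
  subst hs hp
  have h := norm_two_mul_mul_sub_lt_norm hα hz₁ hz₂
  rw [norm_div, div_lt_one ((norm_nonneg _).trans_lt h)]
  exact h
end

section
/- Let k be an n×n positive semidefinite matrix, let s₁,…,sₙ ∈ ℂ, and let Λ_s be the diagonal matrix with entries s₁,…,sₙ. Suppose the matrix with entries (4 − s_i·conj(s_j))·k(i,j) is positive semidefinite. If v ∈ ℂⁿ satisfies k·v = 0, then k·(Λ_s·v) = 0. -/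
open scoped ComplexOrder

/-!
The quadratic form of the Schur product `[(c - sᵢ s̄ⱼ) kᵢⱼ]` at `x` is
`c ⟪k x, x⟫ - ⟪k (s̄ x), s̄ x⟫`. If `k x = 0`, positivity of both matrices forces
`⟪k (s̄ x), s̄ x⟫ = 0`, hence `k (s̄ x) = 0`: the kernel of `k` is invariant under multiplication
by `s̄`, so also under multiplication by `p(s̄)` for every polynomial `p`. Choosing a Lagrange
interpolant with `p(s̄ᵢ) = sᵢ` gives invariance under multiplication by `s`.
-/

open Matrix Polynomial

variable {ι : Type*} [Fintype ι]

lemma star_dotProduct_schur_mulVec {R : Type*} [CommRing R] [StarRing R]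
    (c : R) (s : ι → R) (k : Matrix ι ι R) (x : ι → R) :
    star x ⬝ᵥ (of fun i j => (c - s i * star (s j)) * k i j) *ᵥ x
      = c * (star x ⬝ᵥ k *ᵥ x) - star (star s * x) ⬝ᵥ k *ᵥ (star s * x) := by
  simp only [dotProduct, mulVec, of_apply, Pi.star_apply, Pi.mul_apply, star_mul', star_star,
    Finset.mul_sum, ← Finset.sum_sub_distrib]
  refine Finset.sum_congr rfl fun i _ => Finset.sum_congr rfl fun j _ => ?_
  ring

lemma mulVec_star_mul_eq_zero_of_posSemidef {𝕜 : Type*} [RCLike 𝕜] {k : Matrix ι ι 𝕜}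
    (hk : k.PosSemidef) {c : 𝕜} {s : ι → 𝕜}
    (hM : (of fun i j => (c - s i * star (s j)) * k i j).PosSemidef)
    {x : ι → 𝕜} (hx : k *ᵥ x = 0) :
    k *ᵥ (star s * x) = 0 := by
  rw [← hk.dotProduct_mulVec_zero_iff]
  have hneg := hM.dotProduct_mulVec_nonneg x
  rw [star_dotProduct_schur_mulVec, hx, dotProduct_zero, mul_zero, zero_sub,
    neg_nonneg] at hneg
  exact le_antisymm hneg (hk.dotProduct_mulVec_nonneg _)

lemma mulVec_eval_mul_eq_zero {κ R : Type*} [CommRing R] {k : Matrix κ ι R} {t : ι → R}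
    (ht : ∀ x, k *ᵥ x = 0 → k *ᵥ (t * x) = 0) (p : R[X]) {v : ι → R} (hv : k *ᵥ v = 0) :
    k *ᵥ ((fun i => p.eval (t i)) * v) = 0 := by
  induction p using Polynomial.induction_on with
  | C a =>
    have hC : (fun i => (C a).eval (t i)) * v = a • v := by
      ext i; simp
    rw [hC, mulVec_smul, hv, smul_zero]
  | add p q hp hq =>
    have hadd : (fun i => (p + q).eval (t i)) * v
        = (fun i => p.eval (t i)) * v + (fun i => q.eval (t i)) * v := by
      ext i; simp [add_mul]
    rw [hadd, mulVec_add, hp, hq, add_zero]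
  | monomial m a hm =>
    have hX : (fun i => (C a * X ^ (m + 1)).eval (t i)) * v
        = t * ((fun i => (C a * X ^ m).eval (t i)) * v) := by
      ext i
      simp only [pow_succ, eval_mul, eval_C, eval_pow, eval_X, Pi.mul_apply]
      ring
    rw [hX]
    exact ht _ hm

theorem stmt7 (n : ℕ) (k : Matrix (Fin n) (Fin n) ℂ) (hk : k.PosSemidef)
    (s : Fin n → ℂ)
    (hM : (Matrix.of fun i j => (4 - s i * (starRingEnd ℂ) (s j)) * k i j).PosSemidef)
    (v : Fin n → ℂ) (hv : k.mulVec v = 0) :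
    k.mulVec ((Matrix.diagonal s).mulVec v) = 0 := by
  simp only [starRingEnd_apply] at hM
  obtain ⟨p, hp⟩ : ∃ p : ℂ[X], ∀ i, p.eval (star s i) = s i :=
    (exists_eval_eq_iff _ _).mpr fun i j hij => star_injective hij
  have hdiag : diagonal s *ᵥ v = (fun i => p.eval (star s i)) * v := by
    ext i; rw [mulVec_diagonal, Pi.mul_apply, hp]
  rw [hdiag]
  exact mulVec_eval_mul_eq_zero (fun x hx => mulVec_star_mul_eq_zero_of_posSemidef hk hM hx) p hv
end

section
/- Let k be an n×n positive semidefinite matrix with k(i,i) = 1 for all i, let (s₁,p₁),…,(sₙ,pₙ) ∈ ℂ² be distinct points, and suppose that the matrices ((4 − s_i·conj(s_j))·k(i,j)) and ((1 − p_i·conj(p_j))·k(i,j)) are positive semidefinite. Then k is strictly positive definite (invertible). -/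
/-!
If `k v = 0`, positivity of `((c - f_i conj f_j) k_ij)` applied to `v` gives `-(w* k w) ≥ 0` for
`w = conj f · v`, hence `k w = 0`: the kernel of `k` is stable under multiplication by `conj s` and
`conj p`. The functions preserving the kernel form a subalgebra of `ℂⁿ`, which separates points
because the `(s_i, p_i)` are distinct, and so contains every indicator `e_i`. Thus `v_i e_i` lies in
the kernel, and its `i`-th coordinate `k_ii v_i = v_i` vanishes.
-/

open scoped ComplexOrder

open Matrix

variable {ι 𝕜 : Type*} [Fintype ι] [RCLike 𝕜]

theorem Matrix.of_sub_mul_star_mul_mulVec (k : Matrix ι ι 𝕜) (f : ι → 𝕜) (c : 𝕜) (v : ι → 𝕜) :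
    (of fun i j => (c - f i * starRingEnd 𝕜 (f j)) * k i j) *ᵥ v =
      c • (k *ᵥ v) - f * (k *ᵥ (star f * v)) := by
  ext i
  simp only [mulVec, dotProduct, of_apply, Pi.sub_apply, Pi.smul_apply, Pi.mul_apply,
    Pi.star_apply, smul_eq_mul, Finset.mul_sum, ← Finset.sum_sub_distrib, starRingEnd_apply]
  exact Finset.sum_congr rfl fun j _ => by ring

theorem Matrix.PosSemidef.mulVec_star_mul_eq_zero {k : Matrix ι ι 𝕜} (hk : k.PosSemidef)
    {f : ι → 𝕜} {c : 𝕜}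
    (hf : (of fun i j => (c - f i * starRingEnd 𝕜 (f j)) * k i j).PosSemidef)
    {v : ι → 𝕜} (hv : k *ᵥ v = 0) : k *ᵥ (star f * v) = 0 := by
  set w := star f * v
  have hform : star v ⬝ᵥ ((of fun i j => (c - f i * starRingEnd 𝕜 (f j)) * k i j) *ᵥ v) =
      -(star w ⬝ᵥ (k *ᵥ w)) := by
    rw [of_sub_mul_star_mul_mulVec, hv, smul_zero, zero_sub, dotProduct_neg]
    simp only [w, dotProduct, Pi.mul_apply, Pi.star_apply, star_mul', star_star]
    exact congrArg _ (Finset.sum_congr rfl fun i _ => by ring)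
  have hnonpos : star w ⬝ᵥ (k *ᵥ w) ≤ 0 := neg_nonneg.mp (hform ▸ hf.dotProduct_mulVec_nonneg v)
  exact (hk.dotProduct_mulVec_zero_iff w).mp (le_antisymm hnonpos (hk.dotProduct_mulVec_nonneg w))

namespace Submodule

variable {R A : Type*} [CommSemiring R] [CommSemiring A] [Algebra R A]

def ringOfMultipliers (K : Submodule R A) : Subalgebra R A :=
  (K / K).toSubalgebra (one_mem_div.mpr le_rfl) fun _ _ hx hy z hz => by
    rw [mul_assoc]
    exact hx _ (hy z hz)

theorem mem_ringOfMultipliers {K : Submodule R A} {a : A} :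
    a ∈ K.ringOfMultipliers ↔ ∀ x ∈ K, a * x ∈ K :=
  Iff.rfl

end Submodule

theorem Subalgebra.single_one_mem_of_separatesPoints {ι K : Type*} [Fintype ι] [DecidableEq ι]
    [Field K] (A : Subalgebra K (ι → K)) (hA : (A : Set (ι → K)).SeparatesPoints) (i : ι) :
    Pi.single i 1 ∈ A := by
  have hsep : ∀ j, ∃ φ ∈ A, j ≠ i → φ j ≠ φ i := fun j => by
    by_cases hj : j = i
    · exact ⟨0, A.zero_mem, fun h => absurd hj h⟩
    · obtain ⟨φ, hφ, hne⟩ := hA hj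
      exact ⟨φ, hφ, fun _ => hne⟩
  choose φ hφA hφ using hsep
  -- each factor is `1` at `i` and the `j`-th one vanishes at `j`
  let ψ := ∏ j ∈ Finset.univ.erase i, (φ j i - φ j j)⁻¹ • (φ j - algebraMap K _ (φ j j))
  have hψA : ψ ∈ A := Subalgebra.prod_mem _ fun j _ =>
    A.smul_mem (A.sub_mem (hφA j) (A.algebraMap_mem _)) _
  suffices ψ = Pi.single i 1 from this ▸ hψA
  ext x
  simp only [ψ, Finset.prod_apply, Pi.smul_apply, Pi.sub_apply, Pi.algebraMap_apply, smul_eq_mul]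
  rcases eq_or_ne x i with rfl | hx
  · rw [Pi.single_eq_same]
    refine Finset.prod_eq_one fun j hj => inv_mul_cancel₀ (sub_ne_zero.mpr (hφ j ?_).symm)
    exact Finset.ne_of_mem_erase hj
  · rw [Pi.single_eq_of_ne hx]
    exact Finset.prod_eq_zero (Finset.mem_erase.mpr ⟨hx, Finset.mem_univ x⟩) (by simp)

theorem Subalgebra.eq_top_of_separatesPoints {ι K : Type*} [Finite ι] [Field K]
    (A : Subalgebra K (ι → K)) (hA : (A : Set (ι → K)).SeparatesPoints) : A = ⊤ := by
  classical
  cases nonempty_fintype ι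
  refine eq_top_iff.mpr fun f _ => ?_
  rw [pi_eq_sum_univ' f]
  exact A.sum_mem fun i _ => A.smul_mem (A.single_one_mem_of_separatesPoints hA i) _

theorem Matrix.mulVec_injective_of_ker_ringOfMultipliers_eq_top {K : Type*} [Field K]
    [DecidableEq ι] {k : Matrix ι ι K} (hdiag : ∀ i, k i i ≠ 0)
    (htop : (LinearMap.ker k.mulVecLin).ringOfMultipliers = ⊤) : Function.Injective k.mulVec := by
  refine (injective_iff_map_eq_zero k.mulVecLin).mpr fun v hv => funext fun i => ?_
  have hsingle : Pi.single i 1 * v ∈ LinearMap.ker k.mulVecLin :=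
    Submodule.mem_ringOfMultipliers.mp (htop ▸ Algebra.mem_top) v hv
  rw [← Pi.single_mul_left, one_mul, LinearMap.mem_ker, mulVecLin_apply, mulVec_single] at hsingle
  simpa [hdiag i] using congrFun hsingle i

theorem stmt9 (n : ℕ) (k : Matrix (Fin n) (Fin n) ℂ) (hk : k.PosSemidef)
    (hdiag : ∀ i, k i i = 1)
    (lam : Fin n → ℂ × ℂ) (hlam : Function.Injective lam)
    (hs : (Matrix.of fun i j =>
      (4 - (lam i).1 * (starRingEnd ℂ) ((lam j).1)) * k i j).PosSemidef)
    (hp : (Matrix.of fun i j =>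
      (1 - (lam i).2 * (starRingEnd ℂ) ((lam j).2)) * k i j).PosSemidef) :
    k.PosDef := by
  set K := LinearMap.ker k.mulVecLin
  have hs' : star (fun i => (lam i).1) ∈ K.ringOfMultipliers :=
    fun _ hv => hk.mulVec_star_mul_eq_zero hs hv
  have hp' : star (fun i => (lam i).2) ∈ K.ringOfMultipliers :=
    fun _ hv => hk.mulVec_star_mul_eq_zero hp hv
  have hsep : (K.ringOfMultipliers : Set (Fin n → ℂ)).SeparatesPoints := by
    intro i j hij
    rcases not_and_or.mp (mt Prod.ext_iff.mpr (hlam.ne hij)) with h | h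
    · exact ⟨_, hs', star_injective.ne h⟩
    · exact ⟨_, hp', star_injective.ne h⟩
  rw [hk.posDef_iff_isUnit, ← mulVec_injective_iff_isUnit]
  exact mulVec_injective_of_ker_ringOfMultipliers_eq_top (fun i => hdiag i ▸ one_ne_zero)
    (Subalgebra.eq_top_of_separatesPoints _ hsep)
end

section
/- Fix n distinct points λ = ((s₁,p₁),…,(sₙ,pₙ)) in ℂ² with each |s_i| ≤ 2. The set 𝒦_λ of n×n positive definite matrices k with k(i,i) = 1 for all i such that ((4 − s_i·conj(s_j))·k(i,j)), ((1 − p_i·conj(p_j))·k(i,j)) and (((2 − αs_i)·conj(2 − αs_j) − (2αp_i − s_i)·conj(2αp_j − s_j))·k(i,j)) are positive semidefinite for all α ∈ 𝔻̄, is a compact subset of the n×n complex matrices. -/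
/-!
Every condition except strict positivity is closed in `k`, and a positive semidefinite `k` with
unit diagonal has entries of modulus at most `1` (its `2 × 2` principal minors are nonnegative), so
it suffices that positive definiteness is automatic. If `k x = 0`, then the quadratic form of
`((c - sᵢ s̄ⱼ) kᵢⱼ)` at `x` equals `-⟪s̄ x, k (s̄ x)⟫`, so positivity of that matrix makes `ker k`
stable under multiplication by `s̄`, and likewise by `p̄`. As the points `(sᵢ, pᵢ)` are distinct,
multiplying `x` by `∏ⱼ≠ᵢ (s̄ - s̄ⱼ)` or `(p̄ - p̄ⱼ)` leaves a nonzero multiple of `xᵢ eᵢ` in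
`ker k`, and `kᵢᵢ = 1` forces `xᵢ = 0`.
-/

open scoped ComplexOrder

open Matrix

namespace Matrix

variable {ι 𝕜 : Type*} [RCLike 𝕜]

theorem PosSemidef.norm_apply_sq_le {A : Matrix ι ι 𝕜} (hA : A.PosSemidef) (i j : ι) :
    ((‖A i j‖ ^ 2 : ℝ) : 𝕜) ≤ A i i * A j j := by
  have h := (hA.submatrix ![i, j]).det_nonneg
  rw [det_fin_two] at h
  simp only [submatrix_apply, Matrix.cons_val_zero, Matrix.cons_val_one] at h
  rw [← hA.isHermitian.apply j i, RCLike.star_def, RCLike.mul_conj] at h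
  simpa [sub_nonneg] using h

variable [Fintype ι]

theorem isClosed_setOf_posSemidef : IsClosed {A : Matrix ι ι 𝕜 | A.PosSemidef} := by
  simp only [posSemidef_iff_dotProduct_mulVec, Set.ofPred_and, Set.ofPred_forall]
  refine (isClosed_eq (continuous_id.matrix_conjTranspose) continuous_id).inter
    (isClosed_iInter fun x => isClosed_Ici.preimage ?_)
  exact continuous_const.dotProduct (continuous_id.matrix_mulVec continuous_const)

theorem isClosed_setOf_posSemidef_hadamard (C : Matrix ι ι 𝕜) :
    IsClosed {A : Matrix ι ι 𝕜 | (C ⊙ A).PosSemidef} :=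
  isClosed_setOf_posSemidef.preimage <|
    continuous_matrix fun i j => continuous_const.mul (continuous_id.matrix_elem i j)

theorem star_dotProduct_hadamard_mulVec (k : Matrix ι ι 𝕜) (c : 𝕜) (s x : ι → 𝕜) :
    star x ⬝ᵥ (of (fun i j => (c - s i * star (s j)) * k i j) *ᵥ x)
      = c * (star x ⬝ᵥ k *ᵥ x) - star (star s * x) ⬝ᵥ k *ᵥ (star s * x) := by
  simp only [dotProduct, mulVec, of_apply, Pi.star_apply, Pi.mul_apply, Finset.mul_sum,
    ← Finset.sum_sub_distrib, star_mul', star_star]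
  refine Finset.sum_congr rfl fun i _ => Finset.sum_congr rfl fun j _ => ?_
  ring

theorem PosSemidef.mulVec_star_mul_eq_zero_s10 {k : Matrix ι ι 𝕜} (hk : k.PosSemidef) {c : 𝕜}
    {s : ι → 𝕜} (hks : (of fun i j => (c - s i * star (s j)) * k i j).PosSemidef)
    {x : ι → 𝕜} (hx : k *ᵥ x = 0) : k *ᵥ (star s * x) = 0 := by
  have h := hks.dotProduct_mulVec_nonneg x
  rw [star_dotProduct_hadamard_mulVec, hx, dotProduct_zero, mul_zero, zero_sub,
    neg_nonneg] at h
  exact (hk.dotProduct_mulVec_zero_iff _).mp (le_antisymm h (hk.dotProduct_mulVec_nonneg _))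

theorem isCompact_setOf_posDef_and {P : Matrix ι ι 𝕜 → Prop} (hP : IsClosed {k | P k})
    (hdiag : ∀ k, P k → ∀ i, k i i = 1) (hpos : ∀ k, k.PosSemidef → P k → k.PosDef) :
    IsCompact {k | k.PosDef ∧ P k} := by
  have hset : {k | k.PosDef ∧ P k} = {k | k.PosSemidef} ∩ {k | P k} :=
    Set.ext fun k => ⟨fun h => ⟨h.1.posSemidef, h.2⟩, fun h => ⟨hpos k h.1 h.2, h.2⟩⟩
  rw [hset]
  refine (isCompact_univ_pi fun _ => isCompact_univ_pi fun _ =>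
    isCompact_closedBall (0 : 𝕜) 1).of_isClosed_subset (isClosed_setOf_posSemidef.inter hP) ?_
  rintro k ⟨hk, hPk⟩ i - j -
  have h := hk.norm_apply_sq_le i j
  rw [hdiag k hPk i, hdiag k hPk j, mul_one, ← RCLike.ofReal_one, RCLike.ofReal_le_ofReal] at h
  simpa using (sq_le_one_iff₀ (norm_nonneg _)).mp h

variable [DecidableEq ι]

theorem mulVec_single_eq_zero_of_separating {K : Type*} [Field K] {k : Matrix ι ι K}
    {W : Set (ι → K)} (hW : ∀ w ∈ W, ∀ z, k *ᵥ z = 0 → k *ᵥ (w * z) = 0)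
    (hsep : Pairwise fun i j => ∃ w ∈ W, w i ≠ w j) {x : ι → K} (hx : k *ᵥ x = 0) (i : ι) :
    k *ᵥ Pi.single i (x i) = 0 := by
  have cutoff : ∀ t : Finset ι, i ∉ t →
      ∃ g : ι → K, g i ≠ 0 ∧ (∀ j ∈ t, g j = 0) ∧ k *ᵥ (g * x) = 0 := by
    intro t
    induction t using Finset.induction_on with
    | empty => exact fun _ => ⟨1, one_ne_zero, by simp, by rwa [one_mul]⟩
    | insert a t ha ih =>
      intro hi
      obtain ⟨g, hgi, hgt, hgx⟩ := ih fun h => hi (Finset.mem_insert_of_mem h)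
      obtain ⟨w, hwW, hw⟩ := hsep (ne_of_mem_of_not_mem (Finset.mem_insert_self a t) hi).symm
      refine ⟨(w - Function.const ι (w a)) * g, ?_, ?_, ?_⟩
      · simpa using mul_ne_zero (sub_ne_zero.mpr hw) hgi
      · intro j hj
        rcases Finset.mem_insert.mp hj with rfl | hj
        · simp
        · simp [hgt j hj]
      · have : (w - Function.const ι (w a)) * g * x = w * (g * x) - w a • (g * x) := by
          ext j; simp; ring
        rw [this, mulVec_sub, mulVec_smul, hW w hwW _ hgx, hgx, smul_zero, sub_zero]
  obtain ⟨g, hgi, hgt, hgx⟩ := cutoff (Finset.univ.erase i) (Finset.notMem_erase i _)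
  have hsingle : g * x = g i • Pi.single i (x i) := by
    ext j
    by_cases hj : j = i
    · subst hj; simp
    · simp [hj, hgt j (Finset.mem_erase.mpr ⟨hj, Finset.mem_univ j⟩)]
  rw [hsingle, mulVec_smul] at hgx
  exact (smul_eq_zero.mp hgx).resolve_left hgi

theorem PosSemidef.posDef_of_separating {k : Matrix ι ι 𝕜} (hk : k.PosSemidef)
    (hdiag : ∀ i, k i i ≠ 0) {W : Set (ι → 𝕜)}
    (hW : ∀ w ∈ W, ∀ z, k *ᵥ z = 0 → k *ᵥ (w * z) = 0)
    (hsep : Pairwise fun i j => ∃ w ∈ W, w i ≠ w j) : k.PosDef := by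
  refine PosDef.of_dotProduct_mulVec_pos hk.isHermitian fun x hx => ?_
  refine (hk.dotProduct_mulVec_nonneg x).lt_of_ne' fun hx0 => hx (funext fun i => ?_)
  have hker := (hk.dotProduct_mulVec_zero_iff x).mp hx0
  have := congrFun (mulVec_single_eq_zero_of_separating hW hsep hker i) i
  rw [mulVec_single] at this
  simpa [hdiag i] using this

theorem PosSemidef.posDef_of_injective {k : Matrix ι ι 𝕜} (hk : k.PosSemidef)
    (hdiag : ∀ i, k i i ≠ 0) {c d : 𝕜} {s p : ι → 𝕜}
    (hinj : Function.Injective fun i => (s i, p i))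
    (hs : (of fun i j => (c - s i * star (s j)) * k i j).PosSemidef)
    (hp : (of fun i j => (d - p i * star (p j)) * k i j).PosSemidef) : k.PosDef := by
  refine hk.posDef_of_separating hdiag (W := {star s, star p}) ?_ fun i j hij => ?_
  · rintro w (rfl | rfl) z hz
    exacts [hk.mulVec_star_mul_eq_zero_s10 hs hz, hk.mulVec_star_mul_eq_zero_s10 hp hz]
  · by_cases hsij : s i = s j
    · exact ⟨star p, by simp, fun h => hij (hinj (Prod.ext hsij (star_injective h)))⟩
    · exact ⟨star s, by simp, fun h => hsij (star_injective h)⟩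

end Matrix

theorem stmt10_general (n : ℕ) (lam : Fin n → ℂ × ℂ) (hlam : Function.Injective lam) :
    IsCompact {k : Matrix (Fin n) (Fin n) ℂ |
      k.PosDef ∧ (∀ i, k i i = 1) ∧
      (Matrix.of fun i j =>
        (4 - (lam i).1 * (starRingEnd ℂ) ((lam j).1)) * k i j).PosSemidef ∧
      (Matrix.of fun i j =>
        (1 - (lam i).2 * (starRingEnd ℂ) ((lam j).2)) * k i j).PosSemidef ∧
      ∀ α : ℂ, ‖α‖ ≤ 1 →
        (Matrix.of fun i j =>
          ((2 - α * (lam i).1) * (starRingEnd ℂ) (2 - α * (lam j).1)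
            - (2 * α * (lam i).2 - (lam i).1) *
              (starRingEnd ℂ) (2 * α * (lam j).2 - (lam j).1)) * k i j).PosSemidef} := by
  refine isCompact_setOf_posDef_and ?_ (fun k hk => hk.1) fun k hk hP =>
    hk.posDef_of_injective (fun i => by simp [hP.1 i]) hlam hP.2.1 hP.2.2.1
  simp only [Set.ofPred_and, Set.ofPred_forall]
  exact (isClosed_iInter fun i =>
      isClosed_eq (continuous_apply_apply i i) continuous_const).inter <|
    (isClosed_setOf_posSemidef_hadamard _).inter <|
    (isClosed_setOf_posSemidef_hadamard _).inter <|
    isClosed_iInter fun _ => isClosed_iInter fun _ => isClosed_setOf_posSemidef_hadamard _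

theorem stmt10 (n : ℕ) (lam : Fin n → ℂ × ℂ) (hlam : Function.Injective lam)
    (hbound : ∀ i, ‖(lam i).1‖ ≤ 2) :
    IsCompact {k : Matrix (Fin n) (Fin n) ℂ |
      k.PosDef ∧ (∀ i, k i i = 1) ∧
      (Matrix.of fun i j =>
        (4 - (lam i).1 * (starRingEnd ℂ) ((lam j).1)) * k i j).PosSemidef ∧
      (Matrix.of fun i j =>
        (1 - (lam i).2 * (starRingEnd ℂ) ((lam j).2)) * k i j).PosSemidef ∧
      ∀ α : ℂ, ‖α‖ ≤ 1 →
        (Matrix.of fun i j =>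
          ((2 - α * (lam i).1) * (starRingEnd ℂ) (2 - α * (lam j).1)
            - (2 * α * (lam i).2 - (lam i).1) *
              (starRingEnd ℂ) (2 * α * (lam j).2 - (lam j).1)) * k i j).PosSemidef} :=
  stmt10_general n lam hlam
end

section
/- Let H be a Hilbert space, let V = [[A, B], [C, D]] : ℂ ⊕ H → ℂ ⊕ H be an isometry (block decomposition with A ∈ ℂ, B : H → ℂ, C : ℂ → H, D : H → H), and let Z : H → H be a bounded operator with ‖Z‖ < 1. Then I_H − D·Z is invertible and |A + B·Z·(I_H − D·Z)⁻¹·C| ≤ 1. -/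
theorem stmt11 {H : Type*} [NormedAddCommGroup H] [InnerProductSpace ℂ H]
    [CompleteSpace H]
    (A : ℂ) (B : H →L[ℂ] ℂ) (C : ℂ →L[ℂ] H) (D : H →L[ℂ] H)
    (hV : ∀ (u : ℂ) (x : H),
      ‖A * u + B x‖ ^ 2 + ‖C u + D x‖ ^ 2 = ‖u‖ ^ 2 + ‖x‖ ^ 2)
    (Z : H →L[ℂ] H) (hZ : ‖Z‖ < 1) :
    IsUnit ((1 : H →L[ℂ] H) - D.comp Z) ∧
      ∀ E : H →L[ℂ] H,
        ((1 : H →L[ℂ] H) - D.comp Z) * E = 1 →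
        E * ((1 : H →L[ℂ] H) - D.comp Z) = 1 →
        ‖A + B (Z (E (C 1)))‖ ≤ 1 := by
  have hDc : ∀ x : H, ‖D x‖ ≤ ‖x‖ := by
    intro x
    have h := hV 0 x
    simp only [mul_zero, zero_add, map_zero, norm_zero] at h
    nlinarith [norm_nonneg (D x), norm_nonneg x, norm_nonneg (B x), sq_nonneg (‖B x‖)]
  have hD : ‖D‖ ≤ 1 := ContinuousLinearMap.opNorm_le_bound D zero_le_one
    (by intro x; simpa using hDc x)
  have hDZ : ‖D.comp Z‖ < 1 := by
    calc ‖D.comp Z‖ ≤ ‖D‖ * ‖Z‖ := ContinuousLinearMap.opNorm_comp_le D Z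
    _ ≤ 1 * ‖Z‖ := by nlinarith [norm_nonneg Z]
    _ < 1 := by simpa using hZ
  refine ⟨⟨Units.oneSub (D.comp Z) hDZ, rfl⟩, ?_⟩
  intro E hE1 hE2
  set y := E (C 1) with hy
  have h1 : ((1 : H →L[ℂ] H) - D.comp Z) (E (C 1)) = C 1 := by
    have := DFunLike.congr_fun hE1 (C 1)
    simpa using this
  have hkey : C 1 + D (Z y) = y := by
    have : y - D (Z y) = C 1 := by simpa [hy] using h1
    rw [← this]; abel
  have h := hV 1 (Z y)
  rw [hkey] at h
  simp only [mul_one, norm_one] at h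
  have hZy : ‖Z y‖ ≤ ‖y‖ := by
    calc ‖Z y‖ ≤ ‖Z‖ * ‖y‖ := Z.le_opNorm y
    _ ≤ 1 * ‖y‖ := by nlinarith [norm_nonneg y]
    _ = ‖y‖ := one_mul _
  nlinarith [norm_nonneg (A + B (Z y)), norm_nonneg y, norm_nonneg (Z y)]
end

section
/- Let k be an n×n positive definite matrix with k(i,i) = 1, let w₁,…,wₙ ∈ 𝔻̄, and suppose the matrix ((ρ² − w_i·conj(w_j))·k(i,j)) is positive semidefinite but not positive definite for some ρ > 0, i.e., there is a nonzero x ∈ ℂⁿ with ∑_{i,j}(ρ² − w_i·conj(w_j))·k(i,j)·conj(x_i)·x_j = 0. Then the operator T on ℂⁿ defined by T·k_j = conj(w_j)·k_j (k_j the j-th column of k, with inner product ⟨k_i,k_j⟩ = k(j,i)) satisfies ‖T‖ = ρ exactly. -/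
open scoped ComplexOrder

/-- For the operator `T k_j = conj (w j) • k_j` on the span of the columns of the positive
definite matrix `k` (inner product `⟨k_i, k_j⟩ = k j i`), `‖T‖ = ρ`, expressed as:
`‖T x‖² ≤ ρ² ‖x‖²` for all `x = ∑ c_j k_j` and equality is attained at a nonzero vector. -/
theorem stmt18 (n : ℕ) (k : Matrix (Fin n) (Fin n) ℂ) (hk : k.PosDef)
    (hdiag : ∀ i, k i i = 1) (w : Fin n → ℂ) (hw : ∀ i, ‖w i‖ ≤ 1)
    (ρ : ℝ) (hρ : 0 < ρ)
    (hpsd : (Matrix.of fun i j =>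
      ((ρ : ℂ) ^ 2 - w i * (starRingEnd ℂ) (w j)) * k i j).PosSemidef)
    (x : Fin n → ℂ) (hx : x ≠ 0)
    (hzero : ∑ i, ∑ j, ((ρ : ℂ) ^ 2 - w i * (starRingEnd ℂ) (w j)) * k i j *
      (starRingEnd ℂ) (x i) * x j = 0) :
    (∀ c : Fin n → ℂ,
      (∑ j, ∑ i, (starRingEnd ℂ) (c i) * c j *
        ((starRingEnd ℂ) (w i) * w j) * k j i) ≤
      (ρ : ℂ) ^ 2 * ∑ j, ∑ i, (starRingEnd ℂ) (c i) * c j * k j i) ∧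
    ∃ c : Fin n → ℂ, c ≠ 0 ∧
      (∑ j, ∑ i, (starRingEnd ℂ) (c i) * c j *
        ((starRingEnd ℂ) (w i) * w j) * k j i) =
      (ρ : ℂ) ^ 2 * ∑ j, ∑ i, (starRingEnd ℂ) (c i) * c j * k j i := by
  have key : ∀ c : Fin n → ℂ,
      (ρ : ℂ) ^ 2 * (∑ j, ∑ i, (starRingEnd ℂ) (c i) * c j * k j i)
        - (∑ j, ∑ i, (starRingEnd ℂ) (c i) * c j * ((starRingEnd ℂ) (w i) * w j) * k j i)
      = ∑ a, ∑ b, ((ρ : ℂ) ^ 2 - w a * (starRingEnd ℂ) (w b)) * k a b *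
          c a * (starRingEnd ℂ) (c b) := by
    intro c
    rw [Finset.mul_sum, ← Finset.sum_sub_distrib]
    refine Finset.sum_congr rfl fun a _ => ?_
    rw [Finset.mul_sum, ← Finset.sum_sub_distrib]
    refine Finset.sum_congr rfl fun b _ => ?_
    ring
  constructor
  · intro c
    have h := hpsd.dotProduct_mulVec_nonneg (star c)
    have h2 : (0 : ℂ) ≤ ∑ a, ∑ b, ((ρ : ℂ) ^ 2 - w a * (starRingEnd ℂ) (w b)) * k a b *
        c a * (starRingEnd ℂ) (c b) := by
      convert h using 1
      simp only [dotProduct, Matrix.mulVec, Matrix.of_apply, Pi.star_apply, star_star]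
      refine Finset.sum_congr rfl fun a _ => ?_
      rw [Finset.mul_sum]
      refine Finset.sum_congr rfl fun b _ => ?_
      simp only [RCLike.star_def]
      ring
    rw [← sub_nonneg, key c]
    exact h2
  · refine ⟨star x, fun h => hx (by simpa using congrArg star h), ?_⟩
    have h0 : ∑ a, ∑ b, ((ρ : ℂ) ^ 2 - w a * (starRingEnd ℂ) (w b)) * k a b *
        (star x) a * (starRingEnd ℂ) ((star x) b) = 0 := by
      rw [← hzero]
      refine Finset.sum_congr rfl fun a _ => Finset.sum_congr rfl fun b _ => ?_
      simp [Pi.star_apply, RCLike.star_def, Complex.conj_conj]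
    have := key (star x)
    rw [h0] at this
    linear_combination -this
end
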